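/- The critical simplexes of Δ(F) are in dimension-preserving bijection with the critical simplexes of F: each critical k-simplex α of F contains exactly one critical k-simplex of Δ(F) in its interior (the simplex α' with the chosen label), and there are no other critical simplexes of Δ(F). -/

import Mathlib

/-- An ordered partition of a finite set `S`: a list of pairwise disjoint nonempty
blocks whose union is `S`. -/
def IsOrderedPartition (S : Finset ℕ) (l : List (Finset ℕ)) : Prop :=
  (∀ I ∈ l, I.Nonempty) ∧ l.Pairwise Disjoint ∧ l.foldr (· ∪ ·) ∅ = S

/-- The non-critical pairing (lower, higher) for a pair `(α, β)` with `β = α ∪ {v}`,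
`A` the vertex set of `α`: rules 1/2 (append/delete the final singleton `{v}`) and
rules 3/4 (split `v` out leftward / merge the singleton `{v}` with the following block). -/
def NCPair (v : ℕ) (A : Finset ℕ) (p q : List (Finset ℕ)) : Prop :=
  (IsOrderedPartition A p ∧ q = p ++ [{v}]) ∨
  (∃ l I r, v ∉ I ∧ I.Nonempty ∧ p = l ++ (insert v I :: r) ∧ q = l ++ ({v} :: I :: r))

/-- `p` is the label of a facet (codimension-one face) of the simplex with label `q`:
either merge two adjacent blocks, or delete the last block. -/
def LabelFacet (p q : List (Finset ℕ)) : Prop :=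
  (∃ l I J r, q = l ++ (I :: J :: r) ∧ p = l ++ ((I ∪ J) :: r)) ∨ (∃ I, q = p ++ [I])

/-- A V-path `β₀, α₁, β₁, α₂, …, β_m, α_{m+1}` of a discrete vector field:
`upper i` is `β_i`, `lower i` is `α_{i+1}`; each `α_{i+1}` is a facet of `β_i`,
each `(α_i, β_i)` (for `1 ≤ i ≤ m`) is a pair of the field, and `αᵢ ≠ αᵢ₊₁`. -/
structure VPath {σ : Type} (Facet : σ → σ → Prop) (Pair : σ → σ → Prop) where
  len : ℕ
  upper : ℕ → σ
  lower : ℕ → σ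
  face_step : ∀ i ≤ len, Facet (lower i) (upper i)
  pair_step : ∀ i < len, Pair (lower i) (upper (i+1))
  lower_ne : ∀ i < len, lower i ≠ lower (i+1)

/-- The underlying sequence of simplexes of a V-path. -/
def pathList {σ : Type} {F P : σ → σ → Prop} (Γ : VPath F P) : List σ :=
  (List.range (Γ.len+1)).flatMap (fun i => [Γ.upper i, Γ.lower i])

/-- The length of the greatest common suffix of two lists of blocks. -/
def gcs (p q : List (Finset ℕ)) : ℕ :=
  ((p.reverse.zip q.reverse).takeWhile (fun x => x.1 == x.2)).length

/-- The list `[n+1, n, …, 1]`. -/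
def ordRev (n : ℕ) : List ℕ := (List.range (n+1)).map (fun i => n+1-i)

/-- The label `({n+1}, {n}, …, {1})` of the distinguished simplex `α'`. -/
def alphaPrime (n : ℕ) : List (Finset ℕ) := (ordRev n).map (fun a => ({a} : Finset ℕ))

/-- The critical pairing (lower, higher) relative to a chosen vertex order `o`
(so that `λ(α') = o.map singleton`): with `i` the length of the greatest common
suffix with `λ(α')` and `x` the entry occupying the `(i+1)`-st block from the end
of `λ(α')`, pair by splitting `x` out leftward / merging the singleton `{x}` with
the following block. -/
def CritPair (o : List ℕ) (p q : List (Finset ℕ)) : Prop :=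
  ∃ x l I r, (o.reverse)[gcs q (o.map (fun a => ({a} : Finset ℕ)))]? = some x ∧
    x ∉ I ∧ I.Nonempty ∧ p = l ++ (insert x I :: r) ∧ q = l ++ ({x} :: I :: r)

/-- An abstract simplicial complex on vertex set `ℕ`. -/
structure AbsSC where
  faces : Set (Finset ℕ)
  nonempty_of_mem : ∀ s ∈ faces, s.Nonempty
  down_closed : ∀ s ∈ faces, ∀ t : Finset ℕ, t ⊆ s → t.Nonempty → t ∈ faces

/-- Simplexes of the barycentric subdivision `Δ(L)`, encoded as nonempty strictly
increasing chains of simplexes of `L`. -/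
def IsBarySimplex (L : AbsSC) (c : List (Finset ℕ)) : Prop :=
  c ≠ [] ∧ c.Chain' (· ⊂ ·) ∧ ∀ t ∈ c, t ∈ L.faces

/-- The carrier of a simplex of `Δ(L)`: the maximal simplex of its chain, i.e. the
simplex of `L` in whose interior it lies. -/
def carrier (c : List (Finset ℕ)) : Finset ℕ := c.getLastD ∅

/-- The label of a chain `s₁ ⊂ s₂ ⊂ ⋯ ⊂ s_{k+1}`: the ordered partition
`(s₁, s₂ \\ s₁, …, s_{k+1} \\ s_k)`. -/
def label : List (Finset ℕ) → List (Finset ℕ)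
  | [] => []
  | s :: rest => s :: List.zipWith (fun a b => b \ a) (s :: rest) rest

/-- Facet relation between simplexes of `Δ(L)`: subchain of codimension one. -/
def FacetChain (c d : List (Finset ℕ)) : Prop := c.Sublist d ∧ c.length + 1 = d.length

/-- Facet relation between simplexes of `L`. -/
def FacetFS (s t : Finset ℕ) : Prop := s ⊆ t ∧ t.card = s.card + 1

/-- `F` is a discrete vector field on `L`: each pair consists of a simplex and a
cofacet and each simplex participates in at most one pair. -/
def IsDVF (L : AbsSC) (F : Finset ℕ → Finset ℕ → Prop) : Prop :=
  (∀ s t, F s t → s ∈ L.faces ∧ t ∈ L.faces ∧ s ⊆ t ∧ t.card = s.card + 1) ∧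
  (∀ s t t', F s t → F s t' → t = t') ∧
  (∀ s s' t, F s t → F s' t → s = s') ∧
  (∀ s t u, F s t → ¬ F t u)

/-- A simplex is critical for `F` if it participates in no pair. -/
def CriticalF (F : Finset ℕ → Finset ℕ → Prop) (s : Finset ℕ) : Prop :=
  (∀ t, ¬ F s t) ∧ (∀ t, ¬ F t s)

/-- `Ord` assigns to each critical simplex of `F` an ordering of its vertices
(the blocks, read left to right, of the chosen label of `α'`). -/
def OrdValid (L : AbsSC) (F : Finset ℕ → Finset ℕ → Prop) (Ord : Finset ℕ → List ℕ) : Prop :=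
  ∀ s ∈ L.faces, CriticalF F s → (Ord s).Nodup ∧ (Ord s).toFinset = s

/-- The discrete vector field `Δ(F)` on the barycentric subdivision: inside each
critical simplex use the greatest-common-suffix pairing relative to the chosen
ordering; inside each non-critical pair `(s, insert v s) ∈ F` use the four rules
with distinguished entry `v`. -/
def DeltaPair (L : AbsSC) (F : Finset ℕ → Finset ℕ → Prop) (Ord : Finset ℕ → List ℕ)
    (c d : List (Finset ℕ)) : Prop :=
  IsBarySimplex L c ∧ IsBarySimplex L d ∧
  ((CriticalF F (carrier c) ∧ carrier d = carrier c ∧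
      CritPair (Ord (carrier c)) (label c) (label d)) ∨
   (∃ s v, F s (insert v s) ∧ v ∉ s ∧
     ((carrier c = s ∧ carrier d = insert v s ∧ label d = label c ++ [{v}]) ∨
      (carrier c = insert v s ∧ carrier d = insert v s ∧
       ∃ l I r, v ∉ I ∧ I.Nonempty ∧ label c = l ++ (insert v I :: r) ∧
         label d = l ++ ({v} :: I :: r)))))

/-- Critical simplexes of `Δ(F)`. -/
def CritDelta (L : AbsSC) (F : Finset ℕ → Finset ℕ → Prop) (Ord : Finset ℕ → List ℕ)
    (c : List (Finset ℕ)) : Prop :=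
  IsBarySimplex L c ∧ ∀ d, ¬ DeltaPair L F Ord c d ∧ ¬ DeltaPair L F Ord d c


section Helpers

/-- auxiliary recursive form of `label` -/
def mylab : Finset ℕ → List (Finset ℕ) → List (Finset ℕ)
  | _, [] => []
  | a, s :: r => (s \ a) :: mylab s r

lemma mylab_eq_zip (rest : List (Finset ℕ)) : ∀ s,
    mylab s rest = List.zipWith (fun a b => b \ a) (s :: rest) rest := by
  induction rest with
  | nil => intro s; rfl
  | cons t r ih => intro s; simp [mylab, ih t]

lemma label_eq_mylab (c : List (Finset ℕ)) : label c = mylab ∅ c := by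
  cases c with
  | nil => rfl
  | cons s r => simp [label, mylab, ← mylab_eq_zip]

/-- partial unions -/
def acc : Finset ℕ → List (Finset ℕ) → List (Finset ℕ)
  | _, [] => []
  | a, b :: r => (a ∪ b) :: acc (a ∪ b) r

lemma acc_mylab (c : List (Finset ℕ)) : ∀ a, List.Chain (· ⊆ ·) a c → acc a (mylab a c) = c := by
  induction c with
  | nil => intro a _; rfl
  | cons s r ih =>
    intro a h
    rw [List.Chain, List.chain_cons] at h
    simp only [mylab, acc, Finset.union_sdiff_of_subset h.1]
    rw [ih s h.2]

lemma mylab_acc (p : List (Finset ℕ)) : ∀ a, (∀ b ∈ p, Disjoint a b) → p.Pairwise Disjoint →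
    mylab a (acc a p) = p := by
  induction p with
  | nil => intro a _ _; rfl
  | cons b r ih =>
    intro a h hp
    rw [List.pairwise_cons] at hp
    simp only [acc, mylab]
    rw [Finset.union_sdiff_cancel_left (h b (by simp)), ih (a ∪ b)
      (fun x hx => Finset.disjoint_union_left.2 ⟨h x (by simp [hx]), hp.1 x hx⟩) hp.2]

lemma mylab_length (c : List (Finset ℕ)) : ∀ a, (mylab a c).length = c.length := by
  induction c with
  | nil => intro a; rfl
  | cons s r ih => intro a; simp [mylab, ih]

lemma acc_length (p : List (Finset ℕ)) : ∀ a, (acc a p).length = p.length := by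
  induction p with
  | nil => intro a; rfl
  | cons b r ih => intro a; simp [acc, ih]

lemma acc_getLastD (p : List (Finset ℕ)) (hp : p ≠ []) : ∀ a d,
    (acc a p).getLastD d = a ∪ p.foldr (· ∪ ·) ∅ := by
  induction p with
  | nil => exact absurd rfl hp
  | cons b r ih =>
    intro a d
    simp only [acc, List.getLastD_cons]
    rcases eq_or_ne r [] with rfl | hr
    · simp [acc]
    · rw [ih hr (a ∪ b) (a ∪ b)]
      simp [Finset.union_assoc]

lemma acc_chain (p : List (Finset ℕ)) : ∀ a, (∀ b ∈ p, b.Nonempty) → (∀ b ∈ p, Disjoint a b) →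
    p.Pairwise Disjoint → List.Chain (· ⊂ ·) a (acc a p) := by
  induction p with
  | nil => intro a _ _ _; exact List.Chain.nil
  | cons b r ih =>
    intro a hne hd hp
    rw [List.pairwise_cons] at hp
    refine List.Chain.cons ?_ (ih (a ∪ b) (fun x hx => hne x (by simp [hx]))
      (fun x hx => Finset.disjoint_union_left.2 ⟨hd x (by simp [hx]), hp.1 x hx⟩) hp.2)
    obtain ⟨y, hy⟩ := hne b (by simp)
    exact Finset.ssubset_iff_of_subset Finset.subset_union_left |>.2
      ⟨y, Finset.mem_union_right _ hy, Finset.disjoint_right.1 (hd b (by simp)) hy⟩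

lemma acc_mem_sub (p : List (Finset ℕ)) : ∀ a t, t ∈ acc a p →
    t ⊆ a ∪ p.foldr (· ∪ ·) ∅ ∧ ((∀ b ∈ p, b.Nonempty) → t.Nonempty) := by
  induction p with
  | nil => intro a t ht; exact absurd ht (by simp [acc])
  | cons b r ih =>
    intro a t ht
    simp only [acc, List.mem_cons] at ht
    rcases ht with rfl | ht
    · constructor
      · rw [List.foldr_cons, ← Finset.union_assoc]
        exact Finset.subset_union_left
      · intro h
        obtain ⟨y, hy⟩ := h b (by simp)
        exact ⟨y, Finset.mem_union_right _ hy⟩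
    · obtain ⟨h1, h2⟩ := ih (a ∪ b) t ht
      constructor
      · rw [List.foldr_cons, ← Finset.union_assoc]
        exact h1
      · exact fun h => h2 fun x hx => h x (by simp [hx])

lemma mylab_part (c : List (Finset ℕ)) : ∀ a, List.Chain (· ⊂ ·) a c →
    (∀ b ∈ mylab a c, b.Nonempty) ∧ (mylab a c).Pairwise Disjoint ∧
    (∀ b ∈ mylab a c, Disjoint a b) ∧ a ∪ (mylab a c).foldr (· ∪ ·) ∅ = c.getLastD a := by
  induction c with
  | nil => intro a _; simp [mylab]
  | cons s r ih =>
    intro a h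
    rw [List.Chain, List.chain_cons] at h
    obtain ⟨ih1, ih2, ih3, ih4⟩ := ih s h.2
    have hd : ∀ b ∈ mylab s r, Disjoint (s \ a) b := fun b hb =>
      (ih3 b hb).mono_left (Finset.sdiff_subset)
    refine ⟨?_, ?_, ?_, ?_⟩
    · intro b hb
      rcases List.mem_cons.1 hb with rfl | hb
      · exact Finset.sdiff_nonempty.2 h.1.not_subset
      · exact ih1 b hb
    · exact List.pairwise_cons.2 ⟨hd, ih2⟩
    · intro b hb
      rcases List.mem_cons.1 hb with rfl | hb
      · exact Finset.disjoint_sdiff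
      · exact (ih3 b hb).mono_left h.1.subset
    · simp only [mylab, List.foldr_cons, List.getLastD_cons]
      rw [← Finset.union_assoc, Finset.union_sdiff_of_subset h.1.subset, ih4]


lemma foldr_mem {x : ℕ} {p : List (Finset ℕ)} :
    x ∈ p.foldr (· ∪ ·) ∅ ↔ ∃ B ∈ p, x ∈ B := by
  induction p with
  | nil => simp
  | cons b r ih => simp [ih]

lemma subset_foldr {B : Finset ℕ} {p : List (Finset ℕ)} (h : B ∈ p) :
    B ⊆ p.foldr (· ∪ ·) ∅ := fun x hx => foldr_mem.2 ⟨B, h, hx⟩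

lemma chain'_of_chain {l : List (Finset ℕ)} {a : Finset ℕ}
    (h : List.Chain (· ⊂ ·) a l) : l.Chain' (· ⊂ ·) := by
  cases l with
  | nil => exact List.isChain_nil
  | cons b r => exact (List.chain_cons.1 h).2

lemma getLast?_carrier {c : List (Finset ℕ)} (h : c ≠ []) : c.getLast? = some (carrier c) := by
  cases hc : c.getLast? with
  | none => exact absurd (List.getLast?_eq_none_iff.1 hc) h
  | some a => simp [carrier, List.getLastD_eq_getLast?, hc]

lemma carrier_mem {c : List (Finset ℕ)} (h : c ≠ []) : carrier c ∈ c := by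
  obtain ⟨h', he⟩ := List.mem_getLast?_eq_getLast (l := c) (x := carrier c)
    (by rw [Option.mem_def, getLast?_carrier h])
  rw [he]; exact List.getLast_mem h'

lemma carrier_concat (c : List (Finset ℕ)) (t : Finset ℕ) : carrier (c ++ [t]) = t := by
  simp [carrier, List.getLastD_eq_getLast?]

lemma mylab_concat (c : List (Finset ℕ)) : ∀ a t,
    mylab a (c ++ [t]) = mylab a c ++ [t \ c.getLastD a] := by
  induction c with
  | nil => intro a t; simp [mylab]
  | cons s r ih =>
    intro a t
    simp only [List.cons_append, mylab, List.append_eq, ih, List.getLastD_cons]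

lemma label_concat (c : List (Finset ℕ)) (t : Finset ℕ) :
    label (c ++ [t]) = label c ++ [t \ carrier c] := by
  rw [label_eq_mylab, label_eq_mylab, mylab_concat]; rfl

lemma bary_label {L : AbsSC} {c : List (Finset ℕ)} (hc : IsBarySimplex L c) :
    IsOrderedPartition (carrier c) (label c) ∧ (label c).length = c.length ∧
      acc ∅ (label c) = c := by
  obtain ⟨hne, hch, hmem⟩ := hc
  have hchain : List.Chain (· ⊂ ·) ∅ c := by
    cases c with
    | nil => exact absurd rfl hne
    | cons s r =>
      exact List.chain_cons.2 ⟨Finset.empty_ssubset.2 (L.nonempty_of_mem s (hmem s (by simp))),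
        hch⟩
  obtain ⟨h1, h2, _, h4⟩ := mylab_part c ∅ hchain
  rw [label_eq_mylab]
  refine ⟨⟨h1, h2, ?_⟩, mylab_length c ∅, acc_mylab c ∅ (List.IsChain.imp (fun ⦃_ _⦄ h => h.subset) hchain)⟩
  simpa [carrier] using h4

lemma bary_of_part {L : AbsSC} {S : Finset ℕ} {p : List (Finset ℕ)} (hS : S ∈ L.faces)
    (hp : IsOrderedPartition S p) (hne : p ≠ []) :
    IsBarySimplex L (acc ∅ p) ∧ carrier (acc ∅ p) = S ∧ label (acc ∅ p) = p ∧
      (acc ∅ p).length = p.length := by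
  obtain ⟨h1, h2, h3⟩ := hp
  have hch := acc_chain p ∅ h1 (fun b _ => Finset.disjoint_empty_left b) h2
  have hnn : acc ∅ p ≠ [] := by
    cases p with
    | nil => exact absurd rfl hne
    | cons b r => simp [acc]
  have hmem : ∀ t ∈ acc ∅ p, t ∈ L.faces := by
    intro t ht
    obtain ⟨hsub, hnet⟩ := acc_mem_sub p ∅ t ht
    refine L.down_closed S hS t ?_ (hnet h1)
    rw [← h3]
    simpa using hsub
  have hcar : carrier (acc ∅ p) = S := by
    show (acc ∅ p).getLastD ∅ = S
    rw [acc_getLastD p hne ∅ ∅, h3]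
    simp
  refine ⟨⟨hnn, chain'_of_chain hch, hmem⟩, hcar, ?_, acc_length p ∅⟩
  rw [label_eq_mylab, mylab_acc p ∅ (fun b _ => Finset.disjoint_empty_left b) h2]

lemma foldr_init (l : List (Finset ℕ)) (A : Finset ℕ) :
    l.foldr (· ∪ ·) A = l.foldr (· ∪ ·) ∅ ∪ A := by
  induction l with
  | nil => simp
  | cons b r ih => simp [ih, Finset.union_assoc]

lemma part_exchange {S : Finset ℕ} {l r : List (Finset ℕ)} {x : ℕ} {I : Finset ℕ}
    (hx : x ∉ I) (hI : I.Nonempty) :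
    IsOrderedPartition S (l ++ (insert x I) :: r) ↔ IsOrderedPartition S (l ++ {x} :: I :: r) := by
  unfold IsOrderedPartition
  rw [Finset.insert_eq]
  constructor
  · rintro ⟨h1, h2, h3⟩
    rw [List.pairwise_append, List.pairwise_cons] at h2
    obtain ⟨h2l, ⟨h2a, h2b⟩, h2c⟩ := h2
    refine ⟨?_, ?_, ?_⟩
    · intro J hJ
      rcases List.mem_append.1 hJ with hJ | hJ
      · exact h1 J (List.mem_append_left _ hJ)
      · rcases List.mem_cons.1 hJ with rfl | hJ
        · exact ⟨x, by simp⟩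
        · rcases List.mem_cons.1 hJ with rfl | hJ
          · exact hI
          · exact h1 J (List.mem_append_right _ (by simp [hJ]))
    · rw [List.pairwise_append, List.pairwise_cons, List.pairwise_cons]
      refine ⟨h2l, ⟨?_, ?_, h2b⟩, ?_⟩
      · intro J hJ
        rcases List.mem_cons.1 hJ with rfl | hJ
        · exact Finset.disjoint_singleton_left.2 hx
        · exact ((h2a J hJ).mono_left Finset.subset_union_left)
      · intro J hJ
        exact ((h2a J hJ).mono_left Finset.subset_union_right)
      · intro J hJ K hK
        rcases List.mem_cons.1 hK with rfl | hK
        · exact ((h2c J hJ ({x} ∪ I) (by simp)).mono_right Finset.subset_union_left)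
        · rcases List.mem_cons.1 hK with rfl | hK
          · exact ((h2c J hJ ({x} ∪ K) (by simp)).mono_right Finset.subset_union_right)
          · exact h2c J hJ K (by simp [hK])
    · rw [List.foldr_append] at h3 ⊢
      simpa [Finset.union_assoc] using h3
  · rintro ⟨h1, h2, h3⟩
    rw [List.pairwise_append, List.pairwise_cons, List.pairwise_cons] at h2
    obtain ⟨h2l, ⟨h2a, h2b, h2c⟩, h2d⟩ := h2
    refine ⟨?_, ?_, ?_⟩
    · intro J hJ
      rcases List.mem_append.1 hJ with hJ | hJ
      · exact h1 J (List.mem_append_left _ hJ)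
      · rcases List.mem_cons.1 hJ with rfl | hJ
        · exact ⟨x, by simp⟩
        · exact h1 J (List.mem_append_right _ (by simp [hJ]))
    · rw [List.pairwise_append, List.pairwise_cons]
      refine ⟨h2l, ⟨?_, h2c⟩, ?_⟩
      · intro K hK
        exact Finset.disjoint_union_left.2 ⟨h2a K (by simp [hK]), h2b K hK⟩
      · intro J hJ K hK
        rcases List.mem_cons.1 hK with rfl | hK
        · exact Finset.disjoint_union_right.2 ⟨h2d J hJ _ (by simp), h2d J hJ _ (by simp)⟩
        · exact h2d J hJ K (by simp [hK])
    · rw [List.foldr_append] at h3 ⊢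
      simpa [Finset.union_assoc] using h3


lemma part_mem_block {S : Finset ℕ} {p : List (Finset ℕ)} (h : IsOrderedPartition S p)
    {x : ℕ} (hx : x ∈ S) : ∃ B, B ∈ p ∧ x ∈ B := by
  rw [← h.2.2] at hx
  obtain ⟨B, hB, hxB⟩ := foldr_mem.1 hx
  exact ⟨B, hB, hxB⟩

lemma part_drop_last {S : Finset ℕ} {l : List (Finset ℕ)} {v : ℕ}
    (h : IsOrderedPartition S (l ++ [{v}])) :
    IsOrderedPartition (l.foldr (· ∪ ·) ∅) l ∧ v ∉ l.foldr (· ∪ ·) ∅ ∧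
      S = insert v (l.foldr (· ∪ ·) ∅) := by
  obtain ⟨h1, h2, h3⟩ := h
  rw [List.pairwise_append] at h2
  have hv : v ∉ l.foldr (· ∪ ·) ∅ := by
    intro hv
    obtain ⟨B, hB, hvB⟩ := foldr_mem.1 hv
    exact Finset.disjoint_left.1 (h2.2.2 B hB {v} (by simp)) hvB (by simp)
  have hS : S = insert v (l.foldr (· ∪ ·) ∅) := by
    rw [← h3, List.foldr_append]
    simp only [List.foldr_cons, List.foldr_nil, Finset.union_empty]
    rw [foldr_init l {v}, Finset.insert_eq, Finset.union_comm]
  exact ⟨⟨fun I hI => h1 I (List.mem_append_left _ hI), h2.1, rfl⟩, hv, hS⟩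

lemma part_append_last {S : Finset ℕ} {l : List (Finset ℕ)} {v : ℕ} (hv : v ∉ S)
    (h : IsOrderedPartition S l) : IsOrderedPartition (insert v S) (l ++ [{v}]) := by
  obtain ⟨h1, h2, h3⟩ := h
  refine ⟨?_, ?_, ?_⟩
  · intro I hI
    rcases List.mem_append.1 hI with hI | hI
    · exact h1 I hI
    · simp at hI; subst hI; exact ⟨v, by simp⟩
  · rw [List.pairwise_append]
    refine ⟨h2, by simp, ?_⟩
    intro a ha b hb
    simp only [List.mem_singleton] at hb; subst hb
    refine Finset.disjoint_singleton_right.2 fun hva => hv ?_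
    rw [← h3]
    exact foldr_mem.2 ⟨a, ha, hva⟩
  · rw [List.foldr_append]
    simp only [List.foldr_cons, List.foldr_nil]
    rw [foldr_init l ({v} ∪ ∅), h3]
    rw [Finset.union_empty, Finset.insert_eq, Finset.union_comm]

lemma takeWhile_zip_self (r : List (Finset ℕ)) (t : List (Finset ℕ × Finset ℕ)) :
    ((r.zip r ++ t).takeWhile (fun x => x.1 == x.2)).length
      = r.length + (t.takeWhile (fun x => x.1 == x.2)).length := by
  induction r with
  | nil => simp
  | cons b r ih =>
    simp only [List.zip_cons_cons, List.cons_append, List.takeWhile_cons]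
    simp only [beq_self_eq_true, if_true, List.length_cons, ih]
    omega

lemma gcs_eq_of {p q : List (Finset ℕ)} (r a b : List (Finset ℕ))
    (hp : p.reverse = r ++ a) (hq : q.reverse = r ++ b)
    (h : ∀ x y, a.head? = some x → b.head? = some y → x ≠ y) : gcs p q = r.length := by
  unfold gcs
  rw [hp, hq, List.zip_append rfl, takeWhile_zip_self]
  have hz : (a.zip b).takeWhile (fun x => x.1 == x.2) = [] := by
    cases a with
    | nil => simp
    | cons x a' =>
      cases b with
      | nil => simp
      | cons y b' =>
        have hxy : x ≠ y := h x y rfl rfl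
        simp [List.zip_cons_cons, List.takeWhile_cons, hxy]
  rw [hz]
  simp

lemma gcs_self (p : List (Finset ℕ)) : gcs p p = p.length := by
  have := gcs_eq_of (p := p) (q := p) p.reverse [] [] (by simp) (by simp) (by simp)
  simpa using this

lemma tw_spec (u : List (Finset ℕ)) : ∀ (v : List (Finset ℕ)),
    u.take (((u.zip v).takeWhile (fun x => x.1 == x.2)).length)
      = v.take (((u.zip v).takeWhile (fun x => x.1 == x.2)).length) ∧
    ∀ x y, (u.drop (((u.zip v).takeWhile (fun x => x.1 == x.2)).length)).head? = some x →
      (v.drop (((u.zip v).takeWhile (fun x => x.1 == x.2)).length)).head? = some y → x ≠ y := by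
  induction u with
  | nil => intro v; simp
  | cons x u' ih =>
    intro v
    cases v with
    | nil => simp
    | cons y v' =>
      by_cases hxy : x = y
      · subst hxy
        have h' := ih v'
        simp only [List.zip_cons_cons, List.takeWhile_cons, beq_self_eq_true, if_true,
          List.length_cons, List.take_succ_cons, List.drop_succ_cons]
        exact ⟨by rw [h'.1], h'.2⟩
      · simp only [List.zip_cons_cons, List.takeWhile_cons]
        rw [if_neg (by simpa using hxy)]
        simp only [List.length_nil, List.take_zero, List.drop_zero, List.head?_cons]
        refine ⟨by simp, ?_⟩
        rintro a b ha hb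
        simp at ha hb
        subst ha; subst hb
        exact hxy


end Helpers

/-- The critical simplexes of `Δ(F)` are in dimension-preserving bijection with the
critical simplexes of `F`: a simplex of `Δ(L)` is critical for `Δ(F)` iff its carrier
is a critical simplex of `F` and its label is the chosen label of that carrier; in
that case its dimension equals that of its carrier. -/
theorem critical_simplexes_of_deltaF (L : AbsSC) (F : Finset ℕ → Finset ℕ → Prop)
    (Ord : Finset ℕ → List ℕ) (hF : IsDVF L F)
    (hMorse : ¬ ∃ Q : VPath FacetFS F, 0 < Q.len ∧ Q.lower Q.len = Q.lower 0)
    (hOrd : OrdValid L F Ord) :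
    ∀ c : List (Finset ℕ), IsBarySimplex L c →
      (CritDelta L F Ord c ↔
        (CriticalF F (carrier c) ∧
          label c = (Ord (carrier c)).map (fun a => ({a} : Finset ℕ)))) ∧
      (CritDelta L F Ord c → c.length = (carrier c).card) := by
  intro c hc
  obtain ⟨hpart, hlen, -⟩ := bary_label hc
  have hcne : c ≠ [] := hc.1
  have hsfaces : carrier c ∈ L.faces := hc.2.2 _ (carrier_mem hcne)
  have main : CritDelta L F Ord c ↔ (CriticalF F (carrier c) ∧
      label c = (Ord (carrier c)).map (fun a => ({a} : Finset ℕ))) := by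
    constructor
    · intro hcd
      have hcrit : CriticalF F (carrier c) := by
        constructor
        · -- no pair upward: otherwise rule 1 pairs c with c ++ [t]
          intro t hFt
          obtain ⟨-, htf, hsub, hcard⟩ := hF.1 _ _ hFt
          have hone : (t \ carrier c).card = 1 := by
            rw [Finset.card_sdiff_of_subset hsub]; omega
          obtain ⟨v, hv⟩ := Finset.card_eq_one.1 hone
          have hvs : v ∉ carrier c := by
            have hm : v ∈ t \ carrier c := by rw [hv]; simp
            exact (Finset.mem_sdiff.1 hm).2
          have htv : t = insert v (carrier c) := by
            have h1 : carrier c ∪ (t \ carrier c) = t := Finset.union_sdiff_of_subset hsub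
            rw [hv] at h1
            rw [← h1, Finset.insert_eq, Finset.union_comm]
          have hss : carrier c ⊂ t := by
            refine (Finset.ssubset_iff_of_subset hsub).2 ⟨v, ?_, hvs⟩
            rw [htv]; simp
          have hdbary : IsBarySimplex L (c ++ [t]) := by
            refine ⟨by simp, ?_, ?_⟩
            · rw [List.Chain', List.isChain_append]
              refine ⟨hc.2.1, by simp, ?_⟩
              intro a ha b hb
              rw [Option.mem_def, getLast?_carrier hcne] at ha
              simp only [List.head?_cons, Option.mem_def, Option.some.injEq] at hb
              injection ha with ha
              rw [← ha, ← hb]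
              exact hss
            · intro u hu
              rcases List.mem_append.1 hu with hu | hu
              · exact hc.2.2 u hu
              · simp only [List.mem_singleton] at hu; subst hu; exact htf
          refine (hcd.2 (c ++ [t])).1 ⟨hc, hdbary, Or.inr ⟨carrier c, v, ?_, hvs,
            Or.inl ⟨rfl, ?_, ?_⟩⟩⟩
          · rw [← htv]; exact hFt
          · rw [carrier_concat, htv]
          · rw [label_concat, hv]
        · -- no pair downward: rules 2/3/4
          intro t hFt
          obtain ⟨htf, -, hsub, hcard⟩ := hF.1 _ _ hFt
          have hone : ((carrier c) \ t).card = 1 := by rw [Finset.card_sdiff_of_subset hsub]; omega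
          obtain ⟨v, hv⟩ := Finset.card_eq_one.1 hone
          have hvt : v ∉ t := by
            have hm : v ∈ carrier c \ t := by rw [hv]; simp
            exact (Finset.mem_sdiff.1 hm).2
          have hvs : v ∈ carrier c := by
            have hm : v ∈ carrier c \ t := by rw [hv]; simp
            exact (Finset.mem_sdiff.1 hm).1
          have hst : carrier c = insert v t := by
            have h1 : t ∪ (carrier c \ t) = carrier c := Finset.union_sdiff_of_subset hsub
            rw [hv] at h1
            rw [← h1, Finset.insert_eq, Finset.union_comm]
          have hFt' : F t (insert v t) := by rw [← hst]; exact hFt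
          obtain ⟨B, hBp, hxB⟩ := part_mem_block hpart hvs
          obtain ⟨l, r, hlr⟩ := List.append_of_mem hBp
          by_cases hBx : B = {v}
          · subst hBx
            cases r with
            | nil =>
              -- rule 2
              have hl : l ≠ [] := by
                rintro rfl
                have hcar1 : carrier c = {v} := by
                  rw [← hpart.2.2, hlr]; simp
                have ht0 : t = ∅ := by
                  rcases Finset.subset_singleton_iff.1 (hcar1 ▸ hsub) with h | h
                  · exact h
                  · exact absurd (h ▸ Finset.mem_singleton_self v) hvt
                exact absurd (L.nonempty_of_mem t htf)
                  (by rw [ht0]; exact Finset.not_nonempty_empty)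
              have hpart' : IsOrderedPartition (carrier c) (l ++ [{v}]) := by
                rw [← hlr]; exact hpart
              obtain ⟨hpl, hvl, hSl⟩ := part_drop_last hpart'
              have hfl : l.foldr (· ∪ ·) ∅ = t := by
                have h2 := hSl
                rw [hst] at h2
                have h3 := congrArg (fun z => Finset.erase z v) h2
                have h4 : t = l.foldr (· ∪ ·) ∅ := by
                  simpa [Finset.erase_insert hvt, Finset.erase_insert hvl] using h3
                exact h4.symm
              rw [hfl] at hpl
              obtain ⟨hdb, hdc, hdl, -⟩ := bary_of_part htf hpl hl
              refine (hcd.2 (acc ∅ l)).2 ⟨hdb, hc, Or.inr ⟨t, v, hFt', hvt,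
                Or.inl ⟨hdc, hst, ?_⟩⟩⟩
              rw [hlr, hdl]
            | cons I r' =>
              -- rule 4
              have hpart' : IsOrderedPartition (carrier c) (l ++ {v} :: I :: r') := by
                rw [← hlr]; exact hpart
              have hxI : v ∉ I := by
                have hpw := hpart'.2.1
                rw [List.pairwise_append, List.pairwise_cons] at hpw
                exact fun hmem =>
                  Finset.disjoint_left.1 (hpw.2.1.1 I (by simp)) (by simp) hmem
              have hIne : I.Nonempty := hpart'.1 I (by simp)
              have hq : IsOrderedPartition (carrier c) (l ++ (insert v I) :: r') :=
                (part_exchange hxI hIne).2 hpart'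
              obtain ⟨hdb, hdc, hdl, -⟩ := bary_of_part hsfaces hq (by simp)
              refine (hcd.2 _).2 ⟨hdb, hc, Or.inr ⟨t, v, hFt', hvt,
                Or.inr ⟨?_, hst, l, I, r', hxI, hIne, ?_, hlr⟩⟩⟩
              · rw [hdc, hst]
              · rw [hdl]
          · -- rule 3
            have hIne : (B.erase v).Nonempty := by
              by_contra hce
              rw [Finset.not_nonempty_iff_eq_empty] at hce
              apply hBx
              refine Finset.eq_singleton_iff_unique_mem.2 ⟨hxB, fun y hy => ?_⟩
              by_contra hyv
              exact absurd (Finset.mem_erase.2 ⟨hyv, hy⟩) (by rw [hce]; simp)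
            have hxI : v ∉ B.erase v := Finset.notMem_erase v B
            have hBeq : insert v (B.erase v) = B := Finset.insert_erase hxB
            have hlr' : label c = l ++ (insert v (B.erase v)) :: r := by
              rw [hBeq]; exact hlr
            have hq : IsOrderedPartition (carrier c) (l ++ {v} :: (B.erase v) :: r) := by
              refine (part_exchange hxI hIne).1 ?_
              rw [← hlr']
              exact hpart
            obtain ⟨hdb, hdc, hdl, -⟩ := bary_of_part hsfaces hq (by simp)
            refine (hcd.2 _).1 ⟨hc, hdb, Or.inr ⟨t, v, hFt', hvt,
              Or.inr ⟨hst, ?_, l, B.erase v, r, hxI, hIne, hlr', ?_⟩⟩⟩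
            · rw [hdc, hst]
            · rw [hdl]
      refine ⟨hcrit, ?_⟩
      by_contra hlab
      obtain ⟨hnod, htof⟩ := hOrd _ hsfaces hcrit
      set o := Ord (carrier c) with ho
      have holen : o.length = (carrier c).card := by
        rw [← htof]; exact (List.toFinset_card_of_nodup hnod).symm
      set al := o.map (fun a => ({a} : Finset ℕ)) with hal
      set p := label c with hp0
      set i := gcs p al with hi
      have hieq : i = ((p.reverse.zip al.reverse).takeWhile (fun x => x.1 == x.2)).length := by
        rw [hi]; rfl
      have hspec := tw_spec p.reverse al.reverse
      rw [← hieq] at hspec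
      have hallen : al.length = o.length := by rw [hal, List.length_map]
      have hile1 : i ≤ p.length := by
        rw [hieq]
        refine le_trans (List.Sublist.length_le (List.takeWhile_sublist _)) ?_
        rw [List.length_zip, List.length_reverse, List.length_reverse]
        omega
      have hile2 : i ≤ o.length := by
        rw [hieq]
        refine le_trans (List.Sublist.length_le (List.takeWhile_sublist _)) ?_
        rw [List.length_zip, List.length_reverse, List.length_reverse, hallen]
        omega
      have hrs : p.reverse.take i = al.reverse.take i := hspec.1
      have halrev : al.reverse = o.reverse.map (fun a => ({a} : Finset ℕ)) := by
        rw [hal, List.map_reverse]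
      have h2 : i < o.length := by
        rcases lt_or_eq_of_le hile2 with h | h
        · exact h
        · exfalso
          have hbl : al.reverse.take i = al.reverse := by
            apply List.take_of_length_le
            rw [List.length_reverse, hallen]; omega
          have hpa : p.reverse = al.reverse ++ p.reverse.drop i := by
            conv_lhs => rw [← List.take_append_drop i p.reverse]
            rw [hrs, hbl]
          have hp2 : p = (p.reverse.drop i).reverse ++ al := by
            have h4 := congrArg List.reverse hpa
            simpa using h4
          cases ha : p.reverse.drop i with
          | nil => apply hlab; rw [ha] at hp2; simpa using hp2
          | cons B' a'' =>
            have hB'p : B' ∈ p := by rw [hp2, ha]; simp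
            obtain ⟨y, hy⟩ := hpart.1 B' hB'p
            have hys : y ∈ carrier c := by
              rw [← hpart.2.2]; exact subset_foldr hB'p hy
            have hyo : y ∈ o := by rw [← List.mem_toFinset, htof]; exact hys
            have hyb : ({y} : Finset ℕ) ∈ al := by
              rw [hal]; exact List.mem_map_of_mem hyo
            have hdisj : Disjoint B' ({y} : Finset ℕ) := by
              have hpw := hpart.2.1
              rw [hp2, List.pairwise_append] at hpw
              exact hpw.2.2 B' (by rw [ha]; simp) _ hyb
            exact Finset.disjoint_left.1 hdisj hy (by simp)
      have h1 : i < p.length := by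
        rcases lt_or_eq_of_le hile1 with h | h
        · exact h
        · exfalso
          have hpr : p.reverse = (o.reverse.take i).map (fun a => ({a} : Finset ℕ)) := by
            rw [show p.reverse = p.reverse.take i from
              (List.take_of_length_le (by rw [List.length_reverse]; omega)).symm, hrs, halrev,
              List.map_take]
          have hsub : carrier c ⊆ (o.reverse.take i).toFinset := by
            intro y hys
            obtain ⟨B, hBp, hyB⟩ := part_mem_block hpart hys
            have hBr : B ∈ p.reverse := List.mem_reverse.2 hBp
            rw [hpr] at hBr
            obtain ⟨z, hz, hzB⟩ := List.mem_map.1 hBr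
            rw [← hzB, Finset.mem_singleton] at hyB
            subst hyB
            exact List.mem_toFinset.2 hz
          have hc1 := Finset.card_le_card hsub
          have hc2 : (o.reverse.take i).toFinset.card ≤ i := by
            refine le_trans (List.toFinset_card_le _) ?_
            rw [List.length_take, List.length_reverse]
            omega
          omega
      -- main construction
      have hane : p.reverse.drop i ≠ [] := by
        intro hh
        have h4 := congrArg List.length hh
        rw [List.length_drop, List.length_reverse] at h4
        simp at h4
        omega
      obtain ⟨B₀, a₂, ha⟩ := List.exists_cons_of_ne_nil hane
      have hx_lt : i < o.reverse.length := by rw [List.length_reverse]; exact h2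
      set x := o.reverse.get ⟨i, hx_lt⟩ with hxdef
      have hxget : o.reverse[i]? = some x := by
        rw [List.getElem?_eq_getElem hx_lt]; rfl
      have hxgetE : o.reverse[i]? = some x := by
        rw [List.getElem?_eq_getElem hx_lt]; rfl
      have hbhead : (al.reverse.drop i).head? = some ({x} : Finset ℕ) := by
        rw [List.head?_drop, halrev, List.getElem?_map, hxgetE]
        rfl
      have hB0 : B₀ ≠ ({x} : Finset ℕ) := by
        refine hspec.2 B₀ {x} ?_ hbhead
        rw [ha]; rfl
      have hxo : x ∈ o := List.mem_reverse.1 (List.get_mem o.reverse ⟨i, hx_lt⟩)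
      have hxs : x ∈ carrier c := by rw [← htof]; exact List.mem_toFinset.2 hxo
      have hxdrop : x ∈ o.reverse.drop i := by
        refine List.mem_of_mem_head? (l := o.reverse.drop i) ?_
        rw [List.head?_drop, hxgetE]
        rfl
      have hnr : o.reverse.Nodup := List.nodup_reverse.2 hnod
      have hxnotr : ∀ B ∈ p.reverse.take i, x ∉ B := by
        intro B hB hxB
        rw [hrs, halrev, ← List.map_take] at hB
        obtain ⟨z, hz, hzB⟩ := List.mem_map.1 hB
        rw [← hzB, Finset.mem_singleton] at hxB
        subst hxB
        exact (List.disjoint_take_drop hnr (le_refl i)) hz hxdrop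
      obtain ⟨B, hBp, hxB⟩ := part_mem_block hpart hxs
      have hBa : B ∈ p.reverse.drop i := by
        have hBr : B ∈ p.reverse := List.mem_reverse.2 hBp
        rw [← List.take_append_drop i p.reverse, List.mem_append] at hBr
        rcases hBr with h | h
        · exact absurd hxB (hxnotr B h)
        · exact h
      obtain ⟨u, w, huw⟩ := List.append_of_mem hBa
      have hp2 : p = (p.reverse.drop i).reverse ++ (p.reverse.take i).reverse := by
        have h4 := congrArg List.reverse (List.take_append_drop i p.reverse)
        rw [List.reverse_append, List.reverse_reverse] at h4
        exact h4.symm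
      have hpdec : p = w.reverse ++ B :: (u.reverse ++ (p.reverse.take i).reverse) := by
        conv_lhs => rw [hp2, huw]
        simp [List.reverse_append]
      by_cases hBsing : B = ({x} : Finset ℕ)
      · -- merge with next block: d is the lower simplex
        subst hBsing
        have hune : u ≠ [] := by
          rintro rfl
          rw [ha] at huw
          simp only [List.nil_append] at huw
          injection huw with h5 h6
          exact hB0 h5
        have hurne : u.reverse ≠ [] := by simpa using hune
        obtain ⟨I, m, hum⟩ := List.exists_cons_of_ne_nil hurne
        have hpdec2 : p = w.reverse ++ ({x} : Finset ℕ) :: I ::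
            (m ++ (p.reverse.take i).reverse) := by
          conv_lhs => rw [hpdec, hum]
          simp
        have hpart2 : IsOrderedPartition (carrier c)
            (w.reverse ++ ({x} : Finset ℕ) :: I :: (m ++ (p.reverse.take i).reverse)) := by
          rw [← hpdec2]; exact hpart
        have hxI : x ∉ I := by
          have hpw := hpart2.2.1
          rw [List.pairwise_append, List.pairwise_cons] at hpw
          exact fun hmem =>
            Finset.disjoint_left.1 (hpw.2.1.1 I (by simp)) (by simp) hmem
        have hIne : I.Nonempty := hpart2.1 I (by simp)
        have hq : IsOrderedPartition (carrier c)
            (w.reverse ++ (insert x I) :: (m ++ (p.reverse.take i).reverse)) :=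
          (part_exchange hxI hIne).2 hpart2
        obtain ⟨hdb, hdc, hdl, -⟩ := bary_of_part hsfaces hq (by simp)
        refine (hcd.2 _).2 ⟨hdb, hc, Or.inl ⟨?_, ?_, ?_⟩⟩
        · rw [hdc]; exact hcrit
        · rw [hdc]
        · rw [hdc]
          refine ⟨x, w.reverse, I, m ++ (p.reverse.take i).reverse, ?_, hxI, hIne,
            by rw [hdl], ?_⟩
          · rw [← ho, ← hal, ← hp0, ← hi]
            exact hxget
          · rw [← hp0]
            exact hpdec2
      · -- split the block containing x: d is the upper simplex
        have hIne : (B.erase x).Nonempty := by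
          by_contra hce
          rw [Finset.not_nonempty_iff_eq_empty] at hce
          apply hBsing
          refine Finset.eq_singleton_iff_unique_mem.2 ⟨hxB, fun y hy => ?_⟩
          by_contra hyv
          exact absurd (Finset.mem_erase.2 ⟨hyv, hy⟩) (by rw [hce]; simp)
        have hxI : x ∉ B.erase x := Finset.notMem_erase x B
        have hBeq : insert x (B.erase x) = B := Finset.insert_erase hxB
        have hpdec' : p = w.reverse ++ (insert x (B.erase x)) ::
            (u.reverse ++ (p.reverse.take i).reverse) := by
          rw [hBeq]; exact hpdec
        have hqpart : IsOrderedPartition (carrier c)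
            (w.reverse ++ ({x} : Finset ℕ) :: (B.erase x) ::
              (u.reverse ++ (p.reverse.take i).reverse)) := by
          refine (part_exchange hxI hIne).1 ?_
          rw [← hpdec']
          exact hpart
        obtain ⟨hdb, hdc, hdl, -⟩ := bary_of_part hsfaces hqpart (by simp)
        have hgcs : gcs (w.reverse ++ ({x} : Finset ℕ) :: (B.erase x) ::
            (u.reverse ++ (p.reverse.take i).reverse)) al = i := by
          have hqrev : (w.reverse ++ ({x} : Finset ℕ) :: (B.erase x) ::
              (u.reverse ++ (p.reverse.take i).reverse)).reverse
              = p.reverse.take i ++ (u ++ (B.erase x) :: ({x} : Finset ℕ) :: w) := by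
            simp [List.reverse_append]
          have halsplit : al.reverse = p.reverse.take i ++ al.reverse.drop i := by
            conv_lhs => rw [← List.take_append_drop i al.reverse]
            rw [hrs]
          have hcond : ∀ X Y, (u ++ (B.erase x) :: ({x} : Finset ℕ) :: w).head? = some X →
              (al.reverse.drop i).head? = some Y → X ≠ Y := by
            intro X Y hX hY
            rw [hbhead] at hY
            injection hY with hY
            subst hY
            cases u with
            | nil =>
              simp only [List.nil_append, List.head?_cons, Option.some.injEq] at hX
              subst hX
              intro heq
              exact hxI (heq ▸ Finset.mem_singleton_self x)
            | cons u0 u' =>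
              simp only [List.cons_append, List.head?_cons, Option.some.injEq] at hX
              subst hX
              rw [ha] at huw
              rw [List.cons_append] at huw
              injection huw with h5 h6
              rw [← h5]
              exact hB0
          have h7 := gcs_eq_of (p.reverse.take i) _ _ hqrev halsplit hcond
          rw [h7, List.length_take, List.length_reverse]
          omega
        refine (hcd.2 _).1 ⟨hc, hdb, Or.inl ⟨hcrit, by rw [hdc], ?_⟩⟩
        refine ⟨x, w.reverse, B.erase x, u.reverse ++ (p.reverse.take i).reverse, ?_,
          hxI, hIne, ?_, by rw [hdl]⟩
        · rw [hdl, ← ho, ← hal, hgcs]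
          exact hxget
        · rw [← hp0]
          exact hpdec'
    · rintro ⟨hcrit, hlab⟩
      refine ⟨hc, fun d => ⟨?_, ?_⟩⟩
      · rintro ⟨-, hd, hcase⟩
        rcases hcase with ⟨-, -, x, l, I, r, -, hxI, hIne, hpeq, -⟩ |
          ⟨s', v, hFsv, hv, hcase⟩
        · have hmem : insert x I ∈ label c := by rw [hpeq]; simp
          rw [hlab] at hmem
          obtain ⟨a, -, hA⟩ := List.mem_map.1 hmem
          obtain ⟨y, hy⟩ := hIne
          have hxa : x ∈ ({a} : Finset ℕ) := hA ▸ Finset.mem_insert_self x I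
          have hya : y ∈ ({a} : Finset ℕ) := hA ▸ Finset.mem_insert_of_mem hy
          rw [Finset.mem_singleton] at hxa hya
          have hxy : x = y := hxa.trans hya.symm
          exact hxI (hxy ▸ hy)
        · rcases hcase with ⟨hc1, -, -⟩ | ⟨hc1, -, -⟩
          · apply hcrit.1 (insert v s')
            rw [hc1]; exact hFsv
          · apply hcrit.2 s'
            rw [hc1]; exact hFsv
      · rintro ⟨hd, -, hcase⟩
        rcases hcase with ⟨-, hcar, hCP⟩ | ⟨s', v, hFsv, hv, hcase⟩
        · obtain ⟨x, l, I, r, hget, -, -, -, -⟩ := hCP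
          rw [← hcar, ← hlab, gcs_self, hlab, List.length_map] at hget
          have hnone : ((Ord (carrier c)).reverse)[(Ord (carrier c)).length]? = none := by
            apply List.getElem?_eq_none
            rw [List.length_reverse]
          rw [hnone] at hget
          exact absurd hget (by simp)
        · rcases hcase with ⟨-, hc1, -⟩ | ⟨-, hc1, -⟩
          · apply hcrit.2 s'
            rw [hc1]; exact hFsv
          · apply hcrit.2 s'
            rw [hc1]; exact hFsv
  refine ⟨main, fun hcd => ?_⟩
  obtain ⟨hcrit, hlab⟩ := main.1 hcd
  obtain ⟨hnd, hto⟩ := hOrd _ hsfaces hcrit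
  rw [← hlen, hlab, List.length_map, ← List.toFinset_card_of_nodup hnd, hto]
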